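/- Let a, b ≥ 1 and let ρ be a positive semidefinite matrix on ℂ^a ⊗ ℂ^b. Then ρ ≤ a · (I_a ⊗ Tr_A(ρ)) in the Loewner order, where Tr_A denotes the partial trace over the first tensor factor and I_a is the identity on ℂ^a. -/

import Mathlib

open Matrix MeasureTheory
open scoped Kronecker ComplexOrder

noncomputable section

/-- The positive semidefinite square root of a matrix (junk value `0` if not PSD). -/
def matSqrt {ι : Type*} [Fintype ι] [DecidableEq ι] (A : Matrix ι ι ℂ) : Matrix ι ι ℂ :=
  open Classical in if h : A.PosSemidef then
    h.1.eigenvectorUnitary.1 * diagonal ((↑) ∘ (√·) ∘ h.1.eigenvalues) *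
      (star h.1.eigenvectorUnitary : Matrix ι ι ℂ) else 0

/-- The matrix absolute value `|X| = √(XᴴX)`. -/
def matAbs {ι : Type*} [Fintype ι] [DecidableEq ι] (X : Matrix ι ι ℂ) : Matrix ι ι ℂ :=
  matSqrt (Xᴴ * X)

/-- Uhlmann fidelity `F(ρ,σ) = (Tr|√ρ√σ|)²`. -/
def fid {ι : Type*} [Fintype ι] [DecidableEq ι] (ρ σ : Matrix ι ι ℂ) : ℝ :=
  ((matAbs (matSqrt ρ * matSqrt σ)).trace).re ^ 2

/-- A density matrix: positive semidefinite with unit trace. -/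
def IsDensity {ι : Type*} [Fintype ι] [DecidableEq ι] (ρ : Matrix ι ι ℂ) : Prop :=
  ρ.PosSemidef ∧ ρ.trace = 1

/-- The rank-one projector `|ψ⟩⟨ψ|`. -/
def ketbra {ι : Type*} (ψ : ι → ℂ) : Matrix ι ι ℂ := Matrix.vecMulVec ψ (star ψ)

/-- The `l`-fold tensor power of a matrix on `ℂ^d`, acting on `(ℂ^d)^{⊗l}`. -/
def tpow {d : ℕ} (M : Matrix (Fin d) (Fin d) ℂ) (l : ℕ) :
    Matrix (Fin l → Fin d) (Fin l → Fin d) ℂ :=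
  Matrix.of fun f g => ∏ i, M (f i) (g i)

/-- Loewner order: `A ⪯ B` iff `B - A` is positive semidefinite. -/
def loewnerLE {ι : Type*} [Fintype ι] (A B : Matrix ι ι ℂ) : Prop := (B - A).PosSemidef

/-- Projector onto the symmetric subspace of `(ℂ^d)^{⊗l}`:
`(1/l!) Σ_{π ∈ S_l} U_π` where `U_π` permutes the tensor factors. -/
def symProj (d l : ℕ) : Matrix (Fin l → Fin d) (Fin l → Fin d) ℂ :=
  (l.factorial : ℂ)⁻¹ •
    ∑ π : Equiv.Perm (Fin l), Matrix.of fun f g => if f = (fun i => g (π i)) then (1 : ℂ) else 0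


/-- Partial trace over the first tensor factor. -/
def ptraceA {a b : ℕ} (ρ : Matrix (Fin a × Fin b) (Fin a × Fin b) ℂ) :
    Matrix (Fin b) (Fin b) ℂ :=
  Matrix.of fun j j' => ∑ i, ρ (i, j) (i, j')

/-! Put `Kₘᵢ = |i⟩⟨m| ⊗ I`. Then `I ⊗ Tr_A ρ = ∑ₘ,ᵢ Kₘᵢ ρ Kₘᵢᴴ`, which dominates its diagonal part
`∑ᵢ Kᵢᵢ ρ Kᵢᵢᴴ`. Since the `Kᵢᵢ` sum to the identity, the pinching inequality
`ρ ≤ a ∑ᵢ Kᵢᵢ ρ Kᵢᵢᴴ` follows from the identity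
`∑ᵢ,ⱼ (Kᵢᵢ - Kⱼⱼ) ρ (Kᵢᵢ - Kⱼⱼ)ᴴ = 2 (a ∑ᵢ Kᵢᵢ ρ Kᵢᵢᴴ - ρ)`, whose left side is positive
semidefinite. -/

open MatrixOrder

theorem Finset.sum_diag_le_sum_sum_of_nonneg {ι M : Type*} [Fintype ι] [AddCommMonoid M]
    [PartialOrder M] [IsOrderedAddMonoid M] {f : ι → ι → M} (hf : ∀ m i, 0 ≤ f m i) :
    ∑ i, f i i ≤ ∑ m, ∑ i, f m i := by
  rw [Finset.sum_comm]
  exact Finset.sum_le_sum fun i _ => Finset.single_le_sum (fun m _ => hf m i) (Finset.mem_univ i)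

namespace Matrix

section Pinching

variable {𝕜 n ι : Type*} [RCLike 𝕜] [Fintype n] [Fintype ι]

theorem sum_sum_sub_mul_mul_conjTranspose_sub (ρ : Matrix n n 𝕜) (K : ι → Matrix n n 𝕜) :
    ∑ i, ∑ j, (K i - K j) * ρ * (K i - K j)ᴴ =
      (2 : 𝕜) • ((Fintype.card ι : 𝕜) • ∑ i, K i * ρ * (K i)ᴴ -
        (∑ i, K i) * ρ * (∑ i, K i)ᴴ) := by
  simp only [sub_mul, mul_sub, conjTranspose_sub, conjTranspose_sum, Finset.sum_sub_distrib,
    Finset.sum_mul, Finset.mul_sum, Finset.sum_const, Finset.card_univ, smul_sub]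
  rw [Finset.sum_comm (f := fun i j => K j * ρ * (K i)ᴴ)]
  simp only [← Nat.cast_smul_eq_nsmul 𝕜, ← Finset.smul_sum, smul_smul]
  module

theorem PosSemidef.le_card_smul_sum_mul_mul_conjTranspose [DecidableEq n] {ρ : Matrix n n 𝕜}
    (hρ : ρ.PosSemidef) {K : ι → Matrix n n 𝕜} (hK : ∑ i, K i = 1) :
    ρ ≤ (Fintype.card ι : 𝕜) • ∑ i, K i * ρ * (K i)ᴴ := by
  have hsum : (∑ i, ∑ j, (K i - K j) * ρ * (K i - K j)ᴴ).PosSemidef :=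
    posSemidef_sum _ fun i _ => posSemidef_sum _ fun j _ => hρ.mul_mul_conjTranspose_same _
  rw [sum_sum_sub_mul_mul_conjTranspose_sub, hK, Matrix.one_mul, conjTranspose_one,
    Matrix.mul_one] at hsum
  rw [le_iff]
  simpa [smul_smul] using hsum.smul (a := (2 : 𝕜)⁻¹) (by positivity)

end Pinching

theorem sum_single_kronecker_one {α m n : Type*} [NonAssocSemiring α] [Fintype m]
    [DecidableEq m] [DecidableEq n] :
    ∑ i : m, (single i i (1 : α) ⊗ₖ (1 : Matrix n n α)) = 1 := by
  ext ⟨i, j⟩ ⟨i', j'⟩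
  rw [Matrix.sum_apply, Finset.sum_eq_single i] <;> aesop (add simp [single, one_apply])

end Matrix

theorem one_kronecker_ptraceA_eq_sum {a b : ℕ} (ρ : Matrix (Fin a × Fin b) (Fin a × Fin b) ℂ) :
    (1 : Matrix (Fin a) (Fin a) ℂ) ⊗ₖ ptraceA ρ =
      ∑ m, ∑ i, (single i m 1 ⊗ₖ 1) * ρ * (single i m 1 ⊗ₖ (1 : Matrix (Fin b) (Fin b) ℂ))ᴴ := by
  ext ⟨k, j⟩ ⟨k', j'⟩
  simp only [Matrix.sum_apply, mul_apply, kroneckerMap_apply, conjTranspose_apply, single_apply,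
    one_apply, ptraceA, of_apply, Fintype.sum_prod_type]
  rcases eq_or_ne k k' with rfl | h
  · simp [ite_and, apply_ite (starRingEnd ℂ), mul_ite]
  · simp [ite_and, apply_ite (starRingEnd ℂ), mul_ite, h, h.symm]

theorem pinching_corollary_general (a b : ℕ)
    (ρ : Matrix (Fin a × Fin b) (Fin a × Fin b) ℂ) (hρ : ρ.PosSemidef) :
    loewnerLE ρ ((a : ℂ) • ((1 : Matrix (Fin a) (Fin a) ℂ) ⊗ₖ ptraceA ρ)) := by
  set K : Fin a → Fin a → Matrix (Fin a × Fin b) (Fin a × Fin b) ℂ :=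
    fun m i => single i m 1 ⊗ₖ 1
  have hpinch : ρ ≤ (a : ℂ) • ∑ i, K i i * ρ * (K i i)ᴴ := by
    simpa using hρ.le_card_smul_sum_mul_mul_conjTranspose sum_single_kronecker_one
  have hdiag : ∑ i, K i i * ρ * (K i i)ᴴ ≤ ∑ m, ∑ i, K m i * ρ * (K m i)ᴴ :=
    Finset.sum_diag_le_sum_sum_of_nonneg fun m i => (hρ.mul_mul_conjTranspose_same _).nonneg
  rw [loewnerLE, ← le_iff, one_kronecker_ptraceA_eq_sum]
  exact hpinch.trans (smul_le_smul_of_nonneg_left hdiag (by positivity))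

/-- pinching corollary, `ρ ≤ a · (I_a ⊗ Tr_A(ρ))` in the Loewner order. -/
theorem pinching_corollary (a b : ℕ) (ha : 1 ≤ a) (hb : 1 ≤ b)
    (ρ : Matrix (Fin a × Fin b) (Fin a × Fin b) ℂ) (hρ : ρ.PosSemidef) :
    loewnerLE ρ ((a : ℂ) • ((1 : Matrix (Fin a) (Fin a) ℂ) ⊗ₖ ptraceA ρ)) :=
  pinching_corollary_general a b ρ hρ
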